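/- Let $A\subset\mathbb{R}^p$ be a strongly $(\mathcal{H}^d,d)$-rectifiable set. Then there is a constant $C$, depending only on $A$, such that for all $x\in\mathbb{R}^p$ and all $r>0$, $\mathcal{H}^d(A\cap B(x,r))< C r^d$, where $B(x,r)$ is the closed ball of radius $r$ centered at $x$. -/

import Mathlib

/-!
Take `ε = 1`: up to a set of Hausdorff dimension `< d`, which is `μH[d]`-null, `A` is covered by
finitely many images `φᵢ '' Kᵢ` under `2`-bi-Lipschitz maps. Since `φᵢ⁻¹` is `2`-Lipschitz, the
part of `φᵢ '' Kᵢ` inside `closedBall x r` is the image of a subset of `Kᵢ` lying in a ball of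
radius `4 r`; as `μH[d]` is a Haar measure on `ℝᵈ`, its measure is at most a constant times `r ^ d`.
-/

open MeasureTheory Filter Topology Set
open scoped ENNReal NNReal Topology

noncomputable section

abbrev Euc (n : ℕ) : Type := EuclideanSpace ℝ (Fin n)

noncomputable def rieszEnergy {E : Type*} [EMetricSpace E] [MeasurableSpace E]
    (s : ℝ) (μ : Measure E) : ℝ≥0∞ :=
  ∫⁻ x, ∫⁻ y, edist x y ^ (-s) ∂μ ∂μ

noncomputable def rieszPotential {E : Type*} [EMetricSpace E] [MeasurableSpace E]
    (s : ℝ) (μ : Measure E) (x : E) : ℝ≥0∞ :=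
  ∫⁻ y, edist x y ^ (-s) ∂μ

def BiLipschitzOn {E F : Type*} [PseudoMetricSpace E] [PseudoMetricSpace F]
    (L : ℝ) (φ : E → F) (K : Set E) : Prop :=
  ∀ x ∈ K, ∀ y ∈ K, x ≠ y →
    L⁻¹ * dist x y < dist (φ x) (φ y) ∧ dist (φ x) (φ y) < L * dist x y

def StronglyRectifiable {p : ℕ} (d : ℕ) (A : Set (Euc p)) : Prop :=
  ∀ ε : ℝ, 0 < ε → ∃ (N : ℕ) (K : Fin N → Set (Euc d)) (φ : Fin N → Euc d → Euc p),
    (∀ i, IsCompact (K i)) ∧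
    (∀ i, ∃ L : ℝ, L < 1 + ε ∧ BiLipschitzOn L (φ i) (K i)) ∧
    (∀ i j, i ≠ j → μH[(d:ℝ)] (φ i '' K i ∩ φ j '' K j) = 0) ∧
    dimH (A \ ⋃ i, φ i '' K i) < (d : ℝ≥0∞)

def IsEquilibriumMeasure {E : Type*} [EMetricSpace E] [MeasurableSpace E]
    (s : ℝ) (A : Set E) (μ : Measure E) : Prop :=
  IsProbabilityMeasure μ ∧ μ Aᶜ = 0 ∧
    ∀ ν : Measure E, IsProbabilityMeasure ν → ν Aᶜ = 0 →
      rieszEnergy s μ ≤ rieszEnergy s ν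

noncomputable def fourierMeasure {n : ℕ} (μ : Measure (Euc n)) (ξ : Euc n) : ℂ :=
  ∫ x, Complex.exp (-(2 * Real.pi * (inner ℝ x ξ : ℝ)) * Complex.I) ∂μ

open Metric

namespace BiLipschitzOn

variable {E F : Type*} [PseudoMetricSpace E] [PseudoMetricSpace F] {L : ℝ} {φ : E → F}
  {K : Set E} {x y : E}

theorem pos (h : BiLipschitzOn L φ K) (hx : x ∈ K) (hy : y ∈ K) (hxy : x ≠ y) : 0 < L := by
  have hlt := (h x hx y hy hxy).2
  by_contra! hL
  nlinarith [dist_nonneg (x := φ x) (y := φ y), dist_nonneg (x := x) (y := y)]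

theorem mono (h : BiLipschitzOn L φ K) {L' : ℝ} (hLL' : L ≤ L') : BiLipschitzOn L' φ K := by
  intro x hx y hy hxy
  have hL := h.pos hx hy hxy
  obtain ⟨hlow, hup⟩ := h x hx y hy hxy
  constructor
  · calc L'⁻¹ * dist x y ≤ L⁻¹ * dist x y := by gcongr
      _ < dist (φ x) (φ y) := hlow
  · calc dist (φ x) (φ y) < L * dist x y := hup
      _ ≤ L' * dist x y := by gcongr

theorem lipschitzOnWith (h : BiLipschitzOn L φ K) : LipschitzOnWith (Real.toNNReal L) φ K := by
  refine LipschitzOnWith.of_dist_le_mul fun x hx y hy => ?_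
  rcases eq_or_ne x y with rfl | hxy
  · simp
  · calc dist (φ x) (φ y) ≤ L * dist x y := (h x hx y hy hxy).2.le
      _ ≤ Real.toNNReal L * dist x y := by gcongr; exact Real.le_coe_toNNReal L

theorem dist_le_mul (h : BiLipschitzOn L φ K) (hx : x ∈ K) (hy : y ∈ K) :
    dist x y ≤ L * dist (φ x) (φ y) := by
  rcases eq_or_ne x y with rfl | hxy
  · simp
  · have hL := h.pos hx hy hxy
    calc dist x y = L * (L⁻¹ * dist x y) := by field_simp
      _ ≤ L * dist (φ x) (φ y) := by gcongr; exact (h x hx y hy hxy).1.le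

end BiLipschitzOn

theorem BiLipschitzOn.hausdorffMeasure_image_inter_closedBall_le {E F : Type*}
    [NormedAddCommGroup E] [NormedSpace ℝ E] [FiniteDimensional ℝ E] [MeasurableSpace E]
    [BorelSpace E] [MetricSpace F] [MeasurableSpace F] [BorelSpace F] {L : ℝ} {φ : E → F}
    {K : Set E} (h : BiLipschitzOn L φ K) (hL : 0 ≤ L) (x : F) {r : ℝ} (hr : 0 ≤ r) :
    μH[Module.finrank ℝ E] (φ '' K ∩ closedBall x r) ≤
      ENNReal.ofReal ((2 * L ^ 2) ^ Module.finrank ℝ E) *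
        μH[Module.finrank ℝ E] (closedBall (0 : E) 1) * ENNReal.ofReal (r ^ Module.finrank ℝ E) := by
  set n := Module.finrank ℝ E
  rcases (φ '' K ∩ closedBall x r).eq_empty_or_nonempty with hempty | ⟨_, ⟨z, hzK, rfl⟩, hz⟩
  · simp [hempty]
  set ρ := 2 * L * r
  have hsub : φ '' K ∩ closedBall x r ⊆ φ '' (K ∩ closedBall z ρ) := by
    rintro _ ⟨⟨a, haK, rfl⟩, ha⟩
    refine ⟨a, ⟨haK, ?_⟩, rfl⟩
    calc dist a z ≤ L * dist (φ a) (φ z) := h.dist_le_mul haK hzK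
      _ ≤ L * (r + r) := by gcongr; exact (dist_triangle_right _ _ x).trans (add_le_add ha hz)
      _ = ρ := by ring
  have hlip : LipschitzOnWith (Real.toNNReal L) φ (K ∩ closedBall z ρ) :=
    h.lipschitzOnWith.mono inter_subset_left
  calc μH[n] (φ '' K ∩ closedBall x r)
      ≤ μH[n] (φ '' (K ∩ closedBall z ρ)) := measure_mono hsub
    _ ≤ ENNReal.ofReal L ^ n * μH[n] (closedBall z ρ) := by
        have := hlip.hausdorffMeasure_image_le (Nat.cast_nonneg n)
        rw [ENNReal.rpow_natCast] at this
        exact this.trans (mul_le_mul_right (measure_mono inter_subset_right) _)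
    _ = ENNReal.ofReal (L ^ n * ρ ^ n) * μH[n] (closedBall (0 : E) 1) := by
        rw [Measure.addHaar_closedBall' _ _ (by positivity), ENNReal.ofReal_mul (by positivity),
          ENNReal.ofReal_pow hL, mul_assoc]
    _ = _ := by
        rw [show L ^ n * ρ ^ n = (2 * L ^ 2) ^ n * r ^ n by ring,
          ENNReal.ofReal_mul (by positivity), mul_right_comm]

theorem StronglyRectifiable.exists_hausdorffMeasure_inter_closedBall_le {p d : ℕ}
    {A : Set (Euc p)} (h : StronglyRectifiable d A) :
    ∃ c : ℝ≥0∞, c ≠ ∞ ∧ ∀ (x : Euc p) {r : ℝ}, 0 ≤ r →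
      μH[(d:ℝ)] (A ∩ closedBall x r) ≤ c * ENNReal.ofReal (r ^ d) := by
  obtain ⟨N, K, φ, -, hφ, -, hdim⟩ := h 1 one_pos
  have hpiece (i : Fin N) : BiLipschitzOn 2 (φ i) (K i) := by
    obtain ⟨L, hL, hbil⟩ := hφ i
    exact hbil.mono (by linarith)
  set U := ⋃ i, φ i '' K i
  have hrest : μH[(d:ℝ)] (A \ U) = 0 :=
    hausdorffMeasure_of_dimH_lt (d := d) (by exact_mod_cast hdim)
  set c := ENNReal.ofReal ((2 * 2 ^ 2) ^ d) * μH[(d:ℝ)] (closedBall (0 : Euc d) 1)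
  refine ⟨N * c, ?_, fun x r hr ↦ ?_⟩
  · exact ENNReal.mul_ne_top (ENNReal.natCast_ne_top N)
      (ENNReal.mul_ne_top ENNReal.ofReal_ne_top measure_closedBall_lt_top.ne)
  have hcover : A ∩ closedBall x r ⊆ (A \ U) ∪ ⋃ i, (φ i '' K i ∩ closedBall x r) := by
    rw [← iUnion_inter]
    rintro y ⟨hyA, hyB⟩
    by_cases hyU : y ∈ U
    · exact Or.inr ⟨hyU, hyB⟩
    · exact Or.inl ⟨hyA, hyU⟩
  calc μH[(d:ℝ)] (A ∩ closedBall x r)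
      ≤ μH[(d:ℝ)] (A \ U) + ∑ i, μH[(d:ℝ)] (φ i '' K i ∩ closedBall x r) :=
        (measure_mono hcover).trans <|
          (measure_union_le _ _).trans (add_le_add le_rfl (measure_iUnion_fintype_le _ _))
    _ ≤ 0 + ∑ _ : Fin N, c * ENNReal.ofReal (r ^ d) := by
        gcongr with i
        · exact hrest.le
        · have := (hpiece i).hausdorffMeasure_image_inter_closedBall_le zero_le_two x hr
          rwa [finrank_euclideanSpace_fin] at this
    _ = N * c * ENNReal.ofReal (r ^ d) := by simp [mul_assoc]

theorem stmt10 {p d : ℕ} {A : Set (Euc p)} (hrect : StronglyRectifiable d A) :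
    ∃ C : ℝ, 0 < C ∧ ∀ (x : Euc p) (r : ℝ), 0 < r →
      μH[(d:ℝ)] (A ∩ Metric.closedBall x r) < ENNReal.ofReal (C * r ^ d) := by
  obtain ⟨c, hc, hball⟩ := hrect.exists_hausdorffMeasure_inter_closedBall_le
  refine ⟨c.toReal + 1, by positivity, fun x r hr ↦ ?_⟩
  calc μH[(d:ℝ)] (A ∩ closedBall x r) ≤ c * ENNReal.ofReal (r ^ d) := hball x hr.le
    _ = ENNReal.ofReal (c.toReal * r ^ d) := by
        rw [ENNReal.ofReal_mul ENNReal.toReal_nonneg, ENNReal.ofReal_toReal hc]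
    _ < ENNReal.ofReal ((c.toReal + 1) * r ^ d) := by
        rw [ENNReal.ofReal_lt_ofReal_iff (by positivity)]
        gcongr
        linarith

end
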